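/- Sensitivity of the SOC change index to the averaged temperature is initially nonpositive: let Δc solve Δc' = ρ₁ A Δc + ϑ a_g on [t₁, t₁+T] with Δc(t₁) = 0 and ϑ = (1/T)(N − ρ₁/ρ₀), and let s solve the sensitivity equation s' = ρ₁ A s + (∂ρ₁/∂Temp)(A Δc − a_g/(T ρ₀)) with s(t₁) = 0, where ∂ρ₁/∂Temp > 0, δ > 0, all entries of k are positive, 𝟙ᵀA = −δkᵀ, 𝟙ᵀ a_g = 1, N > 0, ρ₀, ρ₁, T > 0. Then there exists ε > 0 such that 𝟙ᵀ s(t) ≤ 0 for all t ∈ [t₁, t₁ + ε]. -/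

import Mathlib

open Matrix Finset

theorem sensitivity_to_temperature_initially_nonpositive
    (A : Matrix (Fin 4) (Fin 4) ℝ) (hA : IsUnit A)
    (δ : ℝ) (hδ : 0 < δ) (k : Fin 4 → ℝ) (hk : ∀ i, 0 < k i)
    (hrow : Matrix.vecMul (fun _ => (1 : ℝ)) A = -δ • k)
    (ag : Fin 4 → ℝ) (hagnn : ∀ i, 0 ≤ ag i) (hag : ∑ i, ag i = 1)
    (hkag : 0 < ∑ i, k i * ag i)
    (N ρ₀ ρ₁ T t₁ dρ ϑ : ℝ)
    (hN : 0 < N) (hρ₀ : 0 < ρ₀) (hρ₁ : 0 < ρ₁) (hT : 0 < T) (hdρ : 0 < dρ)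
    (hϑ : ϑ = (1 / T) * (N - ρ₁ / ρ₀))
    (Δc s : ℝ → Fin 4 → ℝ)
    (hΔc : ∀ t ∈ Set.Icc t₁ (t₁ + T),
      HasDerivAt Δc (ρ₁ • A.mulVec (Δc t) + ϑ • ag) t)
    (hΔcinit : Δc t₁ = 0)
    (hs : ∀ t ∈ Set.Icc t₁ (t₁ + T),
      HasDerivAt s
        (ρ₁ • A.mulVec (s t) + dρ • (A.mulVec (Δc t) - (1 / (T * ρ₀)) • ag)) t)
    (hsinit : s t₁ = 0) :
    ∃ ε > 0, ∀ t ∈ Set.Icc t₁ (t₁ + ε), (∑ i, s t i) ≤ 0 := by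
  have ht₁ : t₁ ∈ Set.Icc t₁ (t₁ + T) := ⟨le_refl _, by linarith⟩
  have hd := hs t₁ ht₁
  rw [hsinit, hΔcinit] at hd
  have hd' : HasDerivAt s ((-(dρ * (1 / (T * ρ₀)))) • ag) t₁ := by
    convert hd using 1
    funext i
    simp [Matrix.mulVec_zero, smul_eq_mul]
    ring
  have hf : HasDerivAt (fun t => ∑ i, s t i)
      (∑ i : Fin 4, ((-(dρ * (1 / (T * ρ₀)))) • ag) i) t₁ :=
    HasDerivAt.fun_sum fun i _ => (hasDerivAt_pi.mp hd' i)
  have hneg : (∑ i : Fin 4, ((-(dρ * (1 / (T * ρ₀)))) • ag) i) < 0 := by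
    have : (∑ i : Fin 4, ((-(dρ * (1 / (T * ρ₀)))) • ag) i)
        = -(dρ * (1 / (T * ρ₀))) * ∑ i, ag i := by
      simp [Pi.smul_apply, smul_eq_mul, Finset.mul_sum]
    rw [this, hag, mul_one]
    have hTρ : 0 < T * ρ₀ := mul_pos hT hρ₀
    have : 0 < dρ * (1 / (T * ρ₀)) := mul_pos hdρ (by positivity)
    linarith
  have hslope := (hf.hasDerivWithinAt (s := Set.Ioi t₁))
  rw [hasDerivWithinAt_iff_tendsto_slope] at hslope
  have hev : ∀ᶠ t in nhdsWithin t₁ (Set.Ioi t₁ \ {t₁}),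
      slope (fun t => ∑ i, s t i) t₁ t < 0 :=
    hslope.eventually_lt_const hneg
  rw [Set.diff_singleton_eq_self (Set.notMem_Ioi.mpr le_rfl)] at hev
  rw [eventually_nhdsWithin_iff] at hev
  rcases Metric.eventually_nhds_iff.mp hev with ⟨ε, hε, hball⟩
  refine ⟨ε / 2, by linarith, fun t ht => ?_⟩
  rcases eq_or_lt_of_le ht.1 with h | h
  · simp [← h, hsinit]
  · have hdist : dist t t₁ < ε := by
      rw [Real.dist_eq, abs_of_pos (by linarith)]
      have := ht.2; linarith
    have hsl := hball hdist h
    have hpos : 0 < t - t₁ := by linarith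
    have : (∑ i, s t i - ∑ i, s t₁ i) / (t - t₁) < 0 := by
      simpa [slope_def_field, div_eq_iff, hsinit] using hsl
    have h0 : (∑ i, s t₁ i) = 0 := by simp [hsinit]
    rw [h0, sub_zero] at this
    rcases div_neg_iff.mp this with ⟨_, h2⟩ | ⟨h1, _⟩ <;> linarith
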